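/- arXiv:1903.08436 — 7 statements merged into one kernel-verified Lean document; each statement's English description precedes it below -/
import Mathlib

section
/- Let G be a closed subgroup of S∞ that is Roelcke precompact. Then G has only countably many open subgroups. -/
/-!
If `V` is an open subgroup and `G = V F V` with `F` finite, then a subgroup `H ≥ V` is determined
by the finite set `H ∩ F`, so only finitely many subgroups contain `V`. In `S∞` the pointwise
stabilisers of finite sets are open and form a neighbourhood basis of the identity, so every open
subgroup of `G` contains one of these countably many subgroups.
-/

open Pointwise

instance permTop : TopologicalSpace (Equiv.Perm ℕ) :=
  TopologicalSpace.induced (fun σ => ((⇑σ, ⇑σ.symm) : (ℕ → ℕ) × (ℕ → ℕ))) inferInstance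

open Filter Topology MulAction

theorem Subgroup.finite_setOf_le_of_mul_mul_eq_univ {G : Type*} [Group G] (V : Subgroup G)
    {F : Set G} (hF : F.Finite) (hVFV : (V : Set G) * F * (V : Set G) = Set.univ) :
    {H : Subgroup G | V ≤ H}.Finite := by
  have hle : ∀ H₁ H₂ : Subgroup G, V ≤ H₁ → V ≤ H₂ →
      (H₁ : Set G) ∩ F ⊆ (H₂ : Set G) ∩ F → H₁ ≤ H₂ := by
    intro H₁ H₂ hV₁ hV₂ hF₁₂ g hg
    obtain ⟨_, ⟨v, hv, f, hf, rfl⟩, w, hw, rfl⟩ : g ∈ (V : Set G) * F * V := hVFV ▸ trivial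
    have hf₁ : f ∈ H₁ := by
      simpa [mul_assoc] using
        H₁.mul_mem (H₁.mul_mem (H₁.inv_mem (hV₁ hv)) hg) (H₁.inv_mem (hV₁ hw))
    exact H₂.mul_mem (H₂.mul_mem (hV₂ hv) (hF₁₂ ⟨hf₁, hf⟩).1) (hV₂ hw)
  refine Set.Finite.of_finite_image (f := fun H : Subgroup G => (H : Set G) ∩ F)
    (hF.finite_subsets.subset ?_) fun H₁ h₁ H₂ h₂ h => ?_
  · rintro _ ⟨H, -, rfl⟩
    exact Set.inter_subset_right
  · exact le_antisymm (hle H₁ H₂ h₁ h₂ h.le) (hle H₂ H₁ h₂ h₁ h.ge)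

theorem Subgroup.countable_setOf_isOpen {G ι : Type*} [Group G] [TopologicalSpace G]
    [Countable ι] (V : ι → Subgroup G) (hV : ∀ H : Subgroup G, IsOpen (H : Set G) → ∃ i, V i ≤ H)
    (hVFV : ∀ i, ∃ F : Set G, F.Finite ∧ (V i : Set G) * F * (V i : Set G) = Set.univ) :
    {H : Subgroup G | IsOpen (H : Set G)}.Countable := by
  refine (Set.countable_iUnion fun i => ?_).mono fun H hH => Set.mem_iUnion.2 (hV H hH)
  obtain ⟨F, hF, hVF⟩ := hVFV i
  exact ((V i).finite_setOf_le_of_mul_mul_eq_univ hF hVF).countable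

theorem exists_finset_eqOn_subset_of_mem_nhds_pi {ι α : Type*} [TopologicalSpace α]
    [DiscreteTopology α] {f : ι → α} {u : Set (ι → α)} (hu : u ∈ 𝓝 f) :
    ∃ I : Finset ι, {g | Set.EqOn g f I} ⊆ u := by
  rw [nhds_pi, Filter.mem_pi'] at hu
  obtain ⟨I, t, ht, hIt⟩ := hu
  refine ⟨I, fun g hg => hIt fun i hi => ?_⟩
  rw [hg hi]
  simpa [nhds_discrete] using ht i

theorem Equiv.Perm.exists_fixingSubgroup_subset_of_mem_nhds_one {U : Set (Equiv.Perm ℕ)}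
    (hU : U ∈ 𝓝 1) : ∃ s : Finset ℕ, (fixingSubgroup (Equiv.Perm ℕ) (s : Set ℕ) : Set _) ⊆ U := by
  rw [nhds_induced, mem_comap] at hU
  obtain ⟨W, hW, hWU⟩ := hU
  rw [nhds_prod_eq, mem_prod_iff] at hW
  obtain ⟨u, hu, v, hv, huv⟩ := hW
  obtain ⟨I, hI⟩ := exists_finset_eqOn_subset_of_mem_nhds_pi hu
  obtain ⟨J, hJ⟩ := exists_finset_eqOn_subset_of_mem_nhds_pi hv
  refine ⟨I ∪ J, fun σ hσ => hWU (huv ⟨hI fun i hi => ?_, hJ fun j hj => ?_⟩)⟩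
  · exact (mem_fixingSubgroup_iff _).1 hσ i (by simp [hi])
  · show σ.symm j = j
    rw [Equiv.symm_apply_eq]
    exact ((mem_fixingSubgroup_iff _).1 hσ j (by simp [hj])).symm

theorem Equiv.Perm.continuous_apply (n : ℕ) : Continuous fun σ : Equiv.Perm ℕ => σ n := by
  have hcont : Continuous fun σ : Equiv.Perm ℕ => ((⇑σ, ⇑σ.symm) : (ℕ → ℕ) × (ℕ → ℕ)) :=
    continuous_induced_dom
  exact (_root_.continuous_apply n).comp hcont.fst

theorem Subgroup.isOpen_fixingSubgroup (G : Subgroup (Equiv.Perm ℕ)) (s : Finset ℕ) :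
    IsOpen (fixingSubgroup G (s : Set ℕ) : Set G) := by
  have hfix : (fixingSubgroup G (s : Set ℕ) : Set G) =
      ⋂ n ∈ s, (fun g : G => (g : Equiv.Perm ℕ) n) ⁻¹' {n} := by
    ext g
    simp [mem_fixingSubgroup_iff, Subgroup.smul_def]
  rw [hfix]
  exact isOpen_biInter_finset fun n _ =>
    ((Equiv.Perm.continuous_apply n).comp continuous_subtype_val).isOpen_preimage _
      (isOpen_discrete _)

theorem Subgroup.exists_fixingSubgroup_le_of_isOpen (G : Subgroup (Equiv.Perm ℕ))
    {H : Subgroup G} (hH : IsOpen (H : Set G)) :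
    ∃ s : Finset ℕ, fixingSubgroup G (s : Set ℕ) ≤ H := by
  obtain ⟨U, hU, hUH⟩ := mem_nhds_subtype _ _ _ |>.1 (hH.mem_nhds H.one_mem)
  obtain ⟨s, hs⟩ := Equiv.Perm.exists_fixingSubgroup_subset_of_mem_nhds_one hU
  refine ⟨s, fun g hg => hUH (hs ?_)⟩
  simpa [mem_fixingSubgroup_iff, Subgroup.smul_def] using hg

theorem stmt0_general (G : Subgroup (Equiv.Perm ℕ))
    (hRP : ∀ U : Set G, IsOpen U → (1 : G) ∈ U →
      ∃ F : Set G, F.Finite ∧ U * F * U = Set.univ) :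
    {H : Subgroup G | IsOpen (H : Set G)}.Countable :=
  Subgroup.countable_setOf_isOpen (fun s : Finset ℕ => fixingSubgroup G (s : Set ℕ))
    (fun _ hH => G.exists_fixingSubgroup_le_of_isOpen hH)
    (fun s => hRP _ (G.isOpen_fixingSubgroup s) (one_mem _))

/-- a Roelcke precompact closed subgroup of `S∞` has only countably many
open subgroups. -/
theorem stmt0 (G : Subgroup (Equiv.Perm ℕ)) (hclosed : IsClosed (G : Set (Equiv.Perm ℕ)))
    (hRP : ∀ U : Set G, IsOpen U → (1 : G) ∈ U →
      ∃ F : Set G, F.Finite ∧ U * F * U = Set.univ) :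
    {H : Subgroup G | IsOpen (H : Set G)}.Countable :=
  stmt0_general G hRP
end

section
/- Let M be a coarse group. For every A ∈ M and every *subgroup U of M, there are a *subgroup V with V ⊑ U and an element B ∈ LC(V) with B ⊑ A; similarly with right *cosets in place of left *cosets. -/
/-! Abstract coarse groups (Nies–Schlicht–Tent). -/

namespace CoarsePaper

/-- A structure with one ternary relation `rel A B C`, read "AB ⊑ C". -/
structure CG (M : Type) : Type where
  rel : M → M → M → Prop

variable {M : Type}

/-- `U` is a *subgroup: `UU ⊑ U`. -/
def IsSub (c : CG M) (U : M) : Prop := c.rel U U U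

/-- For *subgroups, `U ⊑ V` means `UV ⊑ V`. -/
def sle (c : CG M) (U V : M) : Prop := c.rel U V V

/-- `A ∈ LC(U)`: `U` is the ⊑-maximum *subgroup with `AU ⊑ A`. -/
def LC (c : CG M) (U A : M) : Prop :=
  IsSub c U ∧ c.rel A U A ∧ ∀ V, IsSub c V → c.rel A V A → sle c V U

/-- `A ∈ RC(U)`: `U` is the ⊑-maximum *subgroup with `UA ⊑ A`. -/
def RC (c : CG M) (U A : M) : Prop :=
  IsSub c U ∧ c.rel U A A ∧ ∀ V, IsSub c V → c.rel V A A → sle c V U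

/-- `A ⊑ B` for arbitrary elements: `AU ⊑ B` for some *subgroup `U` with `A ∈ LC(U)`. -/
def cle (c : CG M) (A B : M) : Prop := ∃ U, LC c U A ∧ c.rel A U B

/-- `A`, `B` are disjoint: there are no `C`, `D` with `CD ⊑ A` and `CD ⊑ B`. -/
def Disj (c : CG M) (A B : M) : Prop := ¬ ∃ C D, c.rel C D A ∧ c.rel C D B

/-- `S(A,B)`: there is a *subgroup `V` with `A ∈ RC(V)`, `B ∈ LC(V)`, `AB ⊑ V`;
we then write `B = A⋄`. -/
def Srel (c : CG M) (A B : M) : Prop :=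
  ∃ V, RC c V A ∧ LC c V B ∧ c.rel A B V

/-- The axioms of a coarse group. -/
structure Axioms (c : CG M) : Prop where
  -- (0a) ⊑ is a partial order on *subgroups in which any two elements have a meet
  sle_refl : ∀ U, IsSub c U → sle c U U
  sle_antisymm : ∀ U V, IsSub c U → IsSub c V → sle c U V → sle c V U → U = V
  sle_trans : ∀ U V W, IsSub c U → IsSub c V → IsSub c W → sle c U V → sle c V W → sle c U W
  meet : ∀ U V, IsSub c U → IsSub c V → ∃ W, IsSub c W ∧ sle c W U ∧ sle c W V ∧
    ∀ T, IsSub c T → sle c T U → sle c T V → sle c T W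
  -- (0b) every element is a left *coset and a right *coset of some *subgroup
  exists_lc : ∀ A, ∃ U, LC c U A
  exists_rc : ∀ A, ∃ U, RC c U A
  -- (0c) ⊑ is a partial order on M extending ⊑ on *subgroups
  cle_refl : ∀ A, cle c A A
  cle_antisymm : ∀ A B, cle c A B → cle c B A → A = B
  cle_trans : ∀ A B C, cle c A B → cle c B C → cle c A C
  cle_ext : ∀ U V, IsSub c U → IsSub c V → (cle c U V ↔ sle c U V)
  -- (1)
  lc_up : ∀ U' U A', IsSub c U' → IsSub c U → sle c U' U → LC c U' A' →
    ∃ A, LC c U A ∧ cle c A' A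
  lc_disj : ∀ U' U A' A, IsSub c U' → IsSub c U → sle c U' U → LC c U' A' → LC c U A →
    cle c A' A ∨ Disj c A' A
  rc_up : ∀ U' U A', IsSub c U' → IsSub c U → sle c U' U → RC c U' A' →
    ∃ A, RC c U A ∧ cle c A' A
  rc_disj : ∀ U' U A' A, IsSub c U' → IsSub c U → sle c U' U → RC c U' A' → RC c U A →
    cle c A' A ∨ Disj c A' A
  -- (2) monotonicity
  mono : ∀ A₀ A₁ B₀ B₁ C, c.rel B₀ B₁ C → cle c A₀ B₀ → cle c A₁ B₁ → c.rel A₀ A₁ C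
  -- (3)
  lc_sub_iff : ∀ U V B, IsSub c U → IsSub c V → LC c V B →
    (sle c U V ↔ ∃ A, LC c U A ∧ cle c A B)
  rc_sub_iff : ∀ U V B, IsSub c U → IsSub c V → RC c V B →
    (sle c U V ↔ ∃ A, RC c U A ∧ cle c A B)
  -- (4) inverses
  srel_existsUnique : ∀ A, ∃! B, Srel c A B
  srel_symm : ∀ A B, Srel c A B → Srel c B A
  srel_orderIso : ∀ A B A' B', Srel c A A' → Srel c B B' → (cle c A B ↔ cle c A' B')
  -- (5) products of compatible *cosets
  prod_exists : ∀ U V W A B, RC c U A → LC c V A → RC c V B → LC c W B →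
    ∃ C, RC c U C ∧ LC c W C ∧ c.rel A B C ∧ ∀ D, c.rel A B D → cle c C D

/-- A full filter on `M`. -/
structure FullFilter (c : CG M) (x : Set M) : Prop where
  up : ∀ A ∈ x, ∀ B, cle c A B → B ∈ x
  directed : ∀ A ∈ x, ∀ B ∈ x, ∃ C ∈ x, cle c C A ∧ cle c C B
  lc_mem : ∀ U, IsSub c U → ∃ A ∈ x, LC c U A
  rc_mem : ∀ U, IsSub c U → ∃ A ∈ x, RC c U A

/-- The product of two filters: `x·y = {C : ∃ A ∈ x, B ∈ y, AB ⊑ C}`. -/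
def fprod (c : CG M) (x y : Set M) : Set M :=
  {C | ∃ A ∈ x, ∃ B ∈ y, c.rel A B C}

/-- The inverse of a filter: `x⁻¹ = {A⋄ : A ∈ x}`. -/
def finv (c : CG M) (x : Set M) : Set M :=
  {B | ∃ A ∈ x, Srel c A B}

/-- The identity filter: generated by the *subgroups. -/
def fone (c : CG M) : Set M := {C | ∃ U, IsSub c U ∧ cle c U C}

/-- The space `F(M)` of full filters on `M`. -/
abbrev FF (c : CG M) : Type := {x : Set M // FullFilter c x}

/-- The topology on `F(M)` generated by the sets `Â = {x : A ∈ x}`. -/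
def ffTop (c : CG M) : TopologicalSpace (FF c) :=
  TopologicalSpace.generateFrom {S | ∃ A : M, S = {x : FF c | A ∈ x.1}}

/-- `Â`, as a collection of subsets of `M`: the full filters containing `A`. -/
def hatS (c : CG M) (A : M) : Set (Set M) := {x | FullFilter c x ∧ A ∈ x}

/-- Associativity of the product of full filters. -/
def FAssoc (c : CG M) : Prop :=
  ∀ x y z : Set M, FullFilter c x → FullFilter c y → FullFilter c z →
    fprod c (fprod c x y) z = fprod c x (fprod c y z)

/-- The negative-expression axiom. -/
structure NegAx (c : CG M) : Prop where
  rel_iff : ∀ A B C, c.rel A B C ↔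
    ¬ ∃ D E F, cle c D A ∧ cle c E B ∧ c.rel D E F ∧ Disj c C F
  le_iff : ∀ A B, cle c A B ↔ ¬ ∃ C, cle c C A ∧ Disj c B C

/-- The action of a filter on a *coset: `x·A = B` iff `SA ⊑ B` for some `S ∈ x`. -/
def act (c : CG M) (x : Set M) (A B : M) : Prop := ∃ S ∈ x, c.rel S A B

/-- `𝒱 ⊆ F(M)` is a subgroup of the filter group `F(M)`. -/
def IsSubgroupFF (c : CG M) (V : Set (FF c)) : Prop :=
  (∀ z : FF c, z.1 = fone c → z ∈ V) ∧
  (∀ u ∈ V, ∀ v ∈ V, ∀ w : FF c, w.1 = fprod c u.1 v.1 → w ∈ V) ∧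
  (∀ u ∈ V, ∀ w : FF c, w.1 = finv c u.1 → w ∈ V)

/-- The union of double cosets `⋃_{i<n} V̂·Â_i`, as a collection of subsets of `M`
(the underlying sets of the full filters belonging to it). -/
def doubleUnion (c : CG M) (V : M) {n : ℕ} (A : Fin n → M) : Set (Set M) :=
  {z | ∃ i : Fin n, ∃ u v : Set M, FullFilter c u ∧ FullFilter c v ∧ V ∈ u ∧ A i ∈ v ∧
    z = fprod c u v}

/-- The coset-recognition axiom. -/
def CosetRec (c : CG M) : Prop :=
  ∀ V, IsSub c V → ∀ n : ℕ, 1 ≤ n → ∀ A : Fin n → M, (∀ i, LC c V (A i)) →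
    (fone c ∈ doubleUnion c V A ∧
     (∀ p ∈ doubleUnion c V A, ∀ q ∈ doubleUnion c V A, fprod c p q ∈ doubleUnion c V A) ∧
     (∀ p ∈ doubleUnion c V A, finv c p ∈ doubleUnion c V A)) →
    ∃ U, IsSub c U ∧ (∀ i, c.rel V (A i) U) ∧
      ∀ z : Set M, FullFilter c z → U ∈ z → z ∈ doubleUnion c V A

/-- Roelcke precompactness of the filter group `F(M)`: every open neighbourhood `𝒰` of the
identity satisfies `F(M) = 𝒰·F·𝒰` for some finite `F`. -/
def RoelckeFF (c : CG M) : Prop :=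
  ∀ U : Set (FF c), @IsOpen (FF c) (ffTop c) U → (∀ z : FF c, z.1 = fone c → z ∈ U) →
    ∃ F : Set (FF c), F.Finite ∧
      ∀ z : FF c, ∃ u ∈ U, ∃ f ∈ F, ∃ v ∈ U, z.1 = fprod c (fprod c u.1 f.1) v.1


/-- every `A` contains a left (resp. right) *coset of a *subgroup below `U`. -/
theorem stmt1 (c : CG M) (ax : Axioms c) (A U : M) (hU : IsSub c U) :
    (∃ V, IsSub c V ∧ sle c V U ∧ ∃ B, LC c V B ∧ cle c B A) ∧
    (∃ V, IsSub c V ∧ sle c V U ∧ ∃ B, RC c V B ∧ cle c B A) := by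
  constructor
  · obtain ⟨W, hW⟩ := ax.exists_lc A
    obtain ⟨V, hV, hVU, hVW, -⟩ := ax.meet U W hU hW.1
    exact ⟨V, hV, hVU, (ax.lc_sub_iff V W A hV hW.1 hW).mp hVW⟩
  · obtain ⟨W, hW⟩ := ax.exists_rc A
    obtain ⟨V, hV, hVU, hVW, -⟩ := ax.meet U W hU hW.1
    exact ⟨V, hV, hVU, (ax.rc_sub_iff V W A hV hW.1 hW).mp hVW⟩

end CoarsePaper
end

section
/- Let M be a countable coarse group. Then for every A ∈ M there is a full filter x on M with A ∈ x. -/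
/-! Abstract coarse groups (Nies–Schlicht–Tent). -/

namespace CoarsePaper

variable {M : Type}

lemma stepLC (c : CG M) (ax : Axioms c) (B U : M) (hU : IsSub c U) :
    ∃ B', cle c B' B ∧ ∃ W, IsSub c W ∧ sle c W U ∧ LC c W B' := by
  obtain ⟨V, hV⟩ := ax.exists_lc B
  obtain ⟨W, hW, hWU, hWV, -⟩ := ax.meet U V hU hV.1
  obtain ⟨A', hA', hle⟩ := (ax.lc_sub_iff W V B hW hV.1 hV).1 hWV
  exact ⟨A', hle, W, hW, hWU, hA'⟩

lemma stepRC (c : CG M) (ax : Axioms c) (B U : M) (hU : IsSub c U) :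
    ∃ B', cle c B' B ∧ ∃ W, IsSub c W ∧ sle c W U ∧ RC c W B' := by
  obtain ⟨V, hV⟩ := ax.exists_rc B
  obtain ⟨W, hW, hWU, hWV, -⟩ := ax.meet U V hU hV.1
  obtain ⟨A', hA', hle⟩ := (ax.rc_sub_iff W V B hW hV.1 hV).1 hWV
  exact ⟨A', hle, W, hW, hWU, hA'⟩

open scoped Classical in
/-- The decreasing chain of refinements starting at `A`. -/
noncomputable def seqF (c : CG M) (ax : Axioms c) (e : ℕ → M) (A : M) : ℕ → M
  | 0 => A
  | n + 1 =>
    if h : IsSub c (e (n / 2)) then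
      if n % 2 = 0 then (stepLC c ax (seqF c ax e A n) _ h).choose
      else (stepRC c ax (seqF c ax e A n) _ h).choose
    else seqF c ax e A n

lemma seqF_step (c : CG M) (ax : Axioms c) (e : ℕ → M) (A : M) (n : ℕ) :
    cle c (seqF c ax e A (n + 1)) (seqF c ax e A n) := by
  rw [seqF]
  split
  · split
    · exact (stepLC c ax (seqF c ax e A n) _ ‹_›).choose_spec.1
    · exact (stepRC c ax (seqF c ax e A n) _ ‹_›).choose_spec.1
  · exact ax.cle_refl _

lemma seqF_le (c : CG M) (ax : Axioms c) (e : ℕ → M) (A : M) {n m : ℕ} (h : n ≤ m) :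
    cle c (seqF c ax e A m) (seqF c ax e A n) := by
  induction m, h using Nat.le_induction with
  | base => exact ax.cle_refl _
  | succ m hm ih => exact ax.cle_trans _ _ _ (seqF_step c ax e A m) ih

lemma seqF_succ_lc (c : CG M) (ax : Axioms c) (e : ℕ → M) (A : M) (n : ℕ)
    (h : IsSub c (e (n / 2))) (h3 : n % 2 = 0) :
    ∃ W, IsSub c W ∧ sle c W (e (n / 2)) ∧ LC c W (seqF c ax e A (n + 1)) := by
  rw [seqF, dif_pos h, if_pos h3]
  exact (stepLC c ax (seqF c ax e A n) _ h).choose_spec.2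

lemma seqF_succ_rc (c : CG M) (ax : Axioms c) (e : ℕ → M) (A : M) (n : ℕ)
    (h : IsSub c (e (n / 2))) (h3 : n % 2 ≠ 0) :
    ∃ W, IsSub c W ∧ sle c W (e (n / 2)) ∧ RC c W (seqF c ax e A (n + 1)) := by
  rw [seqF, dif_pos h, if_neg h3]
  exact (stepRC c ax (seqF c ax e A n) _ h).choose_spec.2

lemma seqF_lc (c : CG M) (ax : Axioms c) (e : ℕ → M) (A : M) (m : ℕ)
    (h : IsSub c (e m)) :
    ∃ W, IsSub c W ∧ sle c W (e m) ∧ LC c W (seqF c ax e A (2 * m + 1)) := by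
  have h2 : (2 * m) / 2 = m := Nat.mul_div_cancel_left m (by norm_num)
  have := seqF_succ_lc c ax e A (2 * m) (by rwa [h2]) (Nat.mul_mod_right 2 m)
  rwa [h2] at this

lemma seqF_rc (c : CG M) (ax : Axioms c) (e : ℕ → M) (A : M) (m : ℕ)
    (h : IsSub c (e m)) :
    ∃ W, IsSub c W ∧ sle c W (e m) ∧ RC c W (seqF c ax e A (2 * m + 2)) := by
  have h2 : (2 * m + 1) / 2 = m := by omega
  have := seqF_succ_rc c ax e A (2 * m + 1) (by rwa [h2]) (by omega)
  rwa [h2] at this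

/-- in a countable coarse group, every element belongs to some full filter. -/
theorem stmt2 (c : CG M) [Countable M] (ax : Axioms c) (A : M) :
    ∃ x : Set M, FullFilter c x ∧ A ∈ x := by
  have : Nonempty M := ⟨A⟩
  obtain ⟨e, he⟩ := exists_surjective_nat M
  refine ⟨{C | ∃ n, cle c (seqF c ax e A n) C}, ⟨?_, ?_, ?_, ?_⟩, ⟨0, ax.cle_refl A⟩⟩
  · rintro B ⟨n, hn⟩ C hBC
    exact ⟨n, ax.cle_trans _ _ _ hn hBC⟩
  · rintro B ⟨n, hn⟩ C ⟨m, hm⟩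
    refine ⟨seqF c ax e A (max n m), ⟨max n m, ax.cle_refl _⟩, ?_, ?_⟩
    · exact ax.cle_trans _ _ _ (seqF_le c ax e A (Nat.le_max_left n m)) hn
    · exact ax.cle_trans _ _ _ (seqF_le c ax e A (Nat.le_max_right n m)) hm
  · intro U hU
    obtain ⟨m, rfl⟩ := he U
    obtain ⟨W, hW, hWU, hLC⟩ := seqF_lc c ax e A m hU
    obtain ⟨A', hA', hle⟩ := ax.lc_up W (e m) _ hW hU hWU hLC
    exact ⟨A', ⟨2 * m + 1, hle⟩, hA'⟩
  · intro U hU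
    obtain ⟨m, rfl⟩ := he U
    obtain ⟨W, hW, hWU, hRC⟩ := seqF_rc c ax e A m hU
    obtain ⟨A', hA', hle⟩ := ax.rc_up W (e m) _ hW hU hWU hRC
    exact ⟨A', ⟨2 * m + 2, hle⟩, hA'⟩

end CoarsePaper
end

section
/- Let M be a coarse group and let x be a full filter on M. Then x⁻¹ = {A⋄ : A ∈ x} is a full filter on M. -/
/-! Abstract coarse groups (Nies–Schlicht–Tent). -/

namespace CoarsePaper

variable {M : Type}

/-- the inverse `x⁻¹ = {A⋄ : A ∈ x}` of a full filter is a full filter. -/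
theorem stmt3 (c : CG M) (ax : Axioms c) (x : Set M) (hx : FullFilter c x) :
    FullFilter c (finv c x) := by
  have lc_uniq : ∀ U V A, LC c U A → LC c V A → U = V := by
    intro U V A hU hV
    exact ax.sle_antisymm U V hU.1 hV.1 (hV.2.2 U hU.1 hU.2.1) (hU.2.2 V hV.1 hV.2.1)
  have rc_uniq : ∀ U V A, RC c U A → RC c V A → U = V := by
    intro U V A hU hV
    exact ax.sle_antisymm U V hU.1 hV.1 (hV.2.2 U hU.1 hU.2.1) (hU.2.2 V hV.1 hV.2.1)
  constructor
  · rintro A ⟨A₀, hA₀x, hS⟩ B hAB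
    obtain ⟨B₀, hSB, -⟩ := ax.srel_existsUnique B
    have hSB' := ax.srel_symm B B₀ hSB
    have : cle c A₀ B₀ := (ax.srel_orderIso A₀ B₀ A B hS hSB').mpr hAB
    exact ⟨B₀, hx.up A₀ hA₀x B₀ this, hSB'⟩
  · rintro A ⟨A₀, hA₀x, hSA⟩ B ⟨B₀, hB₀x, hSB⟩
    obtain ⟨C₀, hC₀x, hCA, hCB⟩ := hx.directed A₀ hA₀x B₀ hB₀x
    obtain ⟨C, hSC, -⟩ := ax.srel_existsUnique C₀
    refine ⟨C, ⟨C₀, hC₀x, hSC⟩, ?_, ?_⟩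
    · exact (ax.srel_orderIso C₀ A₀ C A hSC hSA).mp hCA
    · exact (ax.srel_orderIso C₀ B₀ C B hSC hSB).mp hCB
  · intro U hU
    obtain ⟨B, hBx, hRC⟩ := hx.rc_mem U hU
    obtain ⟨B', hSB, -⟩ := ax.srel_existsUnique B
    obtain ⟨V, hV1, hV2, hV3⟩ := hSB
    have : V = U := rc_uniq V U B hV1 hRC
    exact ⟨B', ⟨B, hBx, ⟨V, hV1, hV2, hV3⟩⟩, this ▸ hV2⟩
  · intro U hU
    obtain ⟨B, hBx, hLC⟩ := hx.lc_mem U hU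
    obtain ⟨B', hSB, -⟩ := ax.srel_existsUnique B
    have hSB' := ax.srel_symm B B' hSB
    obtain ⟨W, hW1, hW2, hW3⟩ := hSB'
    have : W = U := lc_uniq W U B hW2 hLC
    exact ⟨B', ⟨B, hBx, ax.srel_symm B' B ⟨W, hW1, hW2, hW3⟩⟩, this ▸ hW1⟩

end CoarsePaper
end

section
/- Let M be a coarse group and let x, y be full filters on M. Then x·y = {C ∈ M : there are A ∈ x and B ∈ y with AB ⊑ C} is a full filter on M. -/
/-! Abstract coarse groups (Nies–Schlicht–Tent). -/

namespace CoarsePaper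

variable {M : Type}

/-- The left-coset group of an element is unique. -/
private lemma lc_unique {c : CG M} (ax : Axioms c) {U U' A : M}
    (h : LC c U A) (h' : LC c U' A) : U = U' :=
  ax.sle_antisymm U U' h.1 h'.1 (h'.2.2 U h.1 h.2.1) (h.2.2 U' h'.1 h'.2.1)

/-- Monotonicity of the left-coset group under ⊑. -/
private lemma lcgrp_mono {c : CG M} (ax : Axioms c) {A B U V : M}
    (hAB : cle c A B) (hU : LC c U A) (hV : LC c V B) : sle c U V :=
  (ax.lc_sub_iff U V B hU.1 hV.1 hV).2 ⟨A, hU, hAB⟩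

/-- Monotonicity of the right-coset group under ⊑. -/
private lemma rcgrp_mono {c : CG M} (ax : Axioms c) {A B U V : M}
    (hAB : cle c A B) (hU : RC c U A) (hV : RC c V B) : sle c U V :=
  (ax.rc_sub_iff U V B hU.1 hV.1 hV).2 ⟨A, hU, hAB⟩

/-- Two elements with a common ⊑-lower bound are not disjoint. -/
private lemma nondisj {c : CG M} (ax : Axioms c) {X A B : M}
    (h1 : cle c X A) (h2 : cle c X B) : ¬ Disj c A B := by
  obtain ⟨U, hU, hra⟩ := h1
  obtain ⟨U', hU', hrb⟩ := h2
  intro hd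
  exact hd ⟨X, U, hra, (lc_unique ax hU' hU) ▸ hrb⟩

/-- Two right *cosets of the same *subgroup with a common lower bound are comparable. -/
private lemma rc_squeeze {c : CG M} (ax : Axioms c) {Q A' A X : M}
    (h1 : RC c Q A') (h2 : RC c Q A) (h3 : cle c X A') (h4 : cle c X A) : cle c A' A :=
  (ax.rc_disj Q Q A' A h1.1 h2.1 (ax.sle_refl Q h1.1) h1 h2).resolve_right
    (nondisj ax h3 h4)

/-- Two left *cosets of the same *subgroup with a common lower bound are comparable. -/
private lemma lc_squeeze {c : CG M} (ax : Axioms c) {P A' A X : M}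
    (h1 : LC c P A') (h2 : LC c P A) (h3 : cle c X A') (h4 : cle c X A) : cle c A' A :=
  (ax.lc_disj P P A' A h1.1 h2.1 (ax.sle_refl P h1.1) h1 h2).resolve_right
    (nondisj ax h3 h4)

/-- Given `A ∈ x` and `B ∈ y` we can find `A₀ ∈ x` below `A` and `B₁ ∈ y` below `B`
which form a compatible pair (the left group of `A₀` equals the right group of `B₁`). -/
private lemma compat {c : CG M} (ax : Axioms c) {x y : Set M}
    (hx : FullFilter c x) (hy : FullFilter c y) {A B : M} (hA : A ∈ x) (hB : B ∈ y) :
    ∃ A₀ ∈ x, ∃ B₁ ∈ y, ∃ U₀ T₀ W₁, cle c A₀ A ∧ cle c B₁ B ∧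
      RC c U₀ A₀ ∧ LC c T₀ A₀ ∧ RC c T₀ B₁ ∧ LC c W₁ B₁ := by
  obtain ⟨VB, hRB⟩ := ax.exists_rc B
  obtain ⟨A₁', hA₁', hLA₁'⟩ := hx.lc_mem VB hRB.1
  obtain ⟨A₀, hA₀, hA₀A, hA₀A₁'⟩ := hx.directed A hA A₁' hA₁'
  obtain ⟨T₀, hLA₀⟩ := ax.exists_lc A₀
  have hT₀VB : sle c T₀ VB := lcgrp_mono ax hA₀A₁' hLA₀ hLA₁'
  obtain ⟨B₁', hB₁', hRB₁'⟩ := hy.rc_mem T₀ hLA₀.1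
  obtain ⟨B₀, hB₀, hB₀B, hB₀B₁'⟩ := hy.directed B hB B₁' hB₁'
  obtain ⟨V₀, hRB₀⟩ := ax.exists_rc B₀
  have hV₀T₀ : sle c V₀ T₀ := rcgrp_mono ax hB₀B₁' hRB₀ hRB₁'
  obtain ⟨B₁, hRB₁, hB₀B₁⟩ := ax.rc_up V₀ T₀ B₀ hRB₀.1 hLA₀.1 hV₀T₀ hRB₀
  have hB₁y : B₁ ∈ y := hy.up B₀ hB₀ B₁ hB₀B₁
  obtain ⟨B₂, hRB₂, hB₁B₂⟩ := ax.rc_up T₀ VB B₁ hLA₀.1 hRB.1 hT₀VB hRB₁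
  have hB₂B : cle c B₂ B :=
    rc_squeeze ax hRB₂ hRB (ax.cle_trans _ _ _ hB₀B₁ hB₁B₂) hB₀B
  have hB₁B : cle c B₁ B := ax.cle_trans _ _ _ hB₁B₂ hB₂B
  obtain ⟨U₀, hRA₀⟩ := ax.exists_rc A₀
  obtain ⟨W₁, hLB₁⟩ := ax.exists_lc B₁
  exact ⟨A₀, hA₀, B₁, hB₁y, U₀, T₀, W₁, hA₀A, hB₁B, hRA₀, hLA₀, hRB₁, hLB₁⟩

/-- the product `x·y` of two full filters is a full filter. -/
theorem stmt4 (c : CG M) (ax : Axioms c) (x y : Set M)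
    (hx : FullFilter c x) (hy : FullFilter c y) :
    FullFilter c (fprod c x y) := by
  refine ⟨?_, ?_, ?_, ?_⟩
  · -- upward closure
    rintro C ⟨A, hA, B, hB, hrel⟩ C' hCC'
    obtain ⟨A₀, hA₀x, B₁, hB₁y, U₀, T₀, W₁, hA₀A, hB₁B, hRA₀, hLA₀, hRB₁, hLB₁⟩ :=
      compat ax hx hy hA hB
    obtain ⟨D, hRD, hLD, hrelD, hleast⟩ :=
      ax.prod_exists U₀ T₀ W₁ A₀ B₁ hRA₀ hLA₀ hRB₁ hLB₁
    have hrel₀ : c.rel A₀ B₁ C := ax.mono A₀ B₁ A B C hrel hA₀A hB₁B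
    have hDC : cle c D C := hleast C hrel₀
    have hDC' : cle c D C' := ax.cle_trans D C C' hDC hCC'
    obtain ⟨Q', hRC'⟩ := ax.exists_rc C'
    obtain ⟨P', hLC'⟩ := ax.exists_lc C'
    have hW₁P' : sle c W₁ P' := lcgrp_mono ax hDC' hLD hLC'
    obtain ⟨B', hLB', hB₁B'⟩ := ax.lc_up W₁ P' B₁ hLB₁.1 hLC'.1 hW₁P' hLB₁
    have hB'y : B' ∈ y := hy.up B₁ hB₁y B' hB₁B'
    obtain ⟨V', hRB'⟩ := ax.exists_rc B'
    have hT₀V' : sle c T₀ V' := rcgrp_mono ax hB₁B' hRB₁ hRB'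
    obtain ⟨A', hLA', hA₀A'⟩ := ax.lc_up T₀ V' A₀ hLA₀.1 hRB'.1 hT₀V' hLA₀
    have hA'x : A' ∈ x := hx.up A₀ hA₀x A' hA₀A'
    obtain ⟨U', hRA'⟩ := ax.exists_rc A'
    obtain ⟨G, hRG, hLG, hrelG, hleastG⟩ :=
      ax.prod_exists U' V' P' A' B' hRA' hLA' hRB' hLB'
    have hDG : cle c D G := hleast G (ax.mono A₀ B₁ A' B' G hrelG hA₀A' hB₁B')
    have hGC' : cle c G C' := lc_squeeze ax hLG hLC' hDG hDC'
    have hU'Q' : sle c U' Q' := rcgrp_mono ax hGC' hRG hRC'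
    obtain ⟨A'', hRA'', hA'A''⟩ := ax.rc_up U' Q' A' hRA'.1 hRC'.1 hU'Q' hRA'
    have hA''x : A'' ∈ x := hx.up A' hA'x A'' hA'A''
    obtain ⟨T₂, hLA''⟩ := ax.exists_lc A''
    have hV'T₂ : sle c V' T₂ := lcgrp_mono ax hA'A'' hLA' hLA''
    obtain ⟨B''', hRB''', hB'B'''⟩ := ax.rc_up V' T₂ B' hRB'.1 hLA''.1 hV'T₂ hRB'
    have hB'''y : B''' ∈ y := hy.up B' hB'y B''' hB'B'''
    obtain ⟨P₂, hLB'''⟩ := ax.exists_lc B'''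
    obtain ⟨G'', hRG'', hLG'', hrelG'', hleastG''⟩ :=
      ax.prod_exists Q' T₂ P₂ A'' B''' hRA'' hLA'' hRB''' hLB'''
    have hA₀A'' : cle c A₀ A'' := ax.cle_trans _ _ _ hA₀A' hA'A''
    have hB₁B''' : cle c B₁ B''' := ax.cle_trans _ _ _ hB₁B' hB'B'''
    have hDG'' : cle c D G'' :=
      hleast G'' (ax.mono A₀ B₁ A'' B''' G'' hrelG'' hA₀A'' hB₁B''')
    have h1 : cle c G'' C' := rc_squeeze ax hRG'' hRC' hDG'' hDC'
    have h2 : cle c C' G'' := rc_squeeze ax hRC' hRG'' hDC' hDG''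
    have hEq : G'' = C' := ax.cle_antisymm _ _ h1 h2
    exact ⟨A'', hA''x, B''', hB'''y, hEq ▸ hrelG''⟩
  · -- downward directedness
    rintro C₁ ⟨A, hA, B, hB, hr1⟩ C₂ ⟨A', hA', B', hB', hr2⟩
    obtain ⟨A₂, hA₂, hA₂A, hA₂A'⟩ := hx.directed A hA A' hA'
    obtain ⟨B₂, hB₂, hB₂B, hB₂B'⟩ := hy.directed B hB B' hB'
    obtain ⟨A₀, hA₀x, B₁, hB₁y, U₀, T₀, W₁, hA₀A₂, hB₁B₂, hRA₀, hLA₀, hRB₁, hLB₁⟩ :=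
      compat ax hx hy hA₂ hB₂
    obtain ⟨D, _, _, hrelD, hleast⟩ :=
      ax.prod_exists U₀ T₀ W₁ A₀ B₁ hRA₀ hLA₀ hRB₁ hLB₁
    refine ⟨D, ⟨A₀, hA₀x, B₁, hB₁y, hrelD⟩, ?_, ?_⟩
    · exact hleast C₁ (ax.mono _ _ _ _ _ hr1
        (ax.cle_trans _ _ _ hA₀A₂ hA₂A) (ax.cle_trans _ _ _ hB₁B₂ hB₂B))
    · exact hleast C₂ (ax.mono _ _ _ _ _ hr2
        (ax.cle_trans _ _ _ hA₀A₂ hA₂A') (ax.cle_trans _ _ _ hB₁B₂ hB₂B'))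
  · -- contains a left *coset of every *subgroup
    intro U hU
    obtain ⟨By, hBy, hLBy⟩ := hy.lc_mem U hU
    obtain ⟨VB, hRBy⟩ := ax.exists_rc By
    obtain ⟨Ax, hAx, hLAx⟩ := hx.lc_mem VB hRBy.1
    obtain ⟨UA, hRAx⟩ := ax.exists_rc Ax
    obtain ⟨D, _, hLD, hrelD, _⟩ := ax.prod_exists UA VB U Ax By hRAx hLAx hRBy hLBy
    exact ⟨D, ⟨Ax, hAx, By, hBy, hrelD⟩, hLD⟩
  · -- contains a right *coset of every *subgroup
    intro U hU
    obtain ⟨Ax, hAx, hRAx⟩ := hx.rc_mem U hU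
    obtain ⟨WA, hLAx⟩ := ax.exists_lc Ax
    obtain ⟨By, hBy, hRBy⟩ := hy.rc_mem WA hLAx.1
    obtain ⟨WB, hLBy⟩ := ax.exists_lc By
    obtain ⟨D, hRD, _, hrelD, _⟩ := ax.prod_exists U WA WB Ax By hRAx hLAx hRBy hLBy
    exact ⟨D, ⟨Ax, hAx, By, hBy, hrelD⟩, hRD⟩

end CoarsePaper
end

section
/- Let G be a closed subgroup of S∞ having only countably many open subgroups. Then the map Φ : G → F(M(G)) defined by Φ(g) = {A : A is an open coset of G with g ∈ A} is a group isomorphism and a homeomorphism from G onto the group of full filters F(M(G)) (with the filter product and the topology generated by the sets Â), and its inverse sends a full filter x to the unique g ∈ G with ⋂x = {g}. -/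
namespace CoarseS

variable (G : Subgroup (Equiv.Perm ℕ))

/-- `A` is an open coset of `G`: a left coset `aU` of an open subgroup `U` of `G`. -/
def IsOpenCoset (A : Set G) : Prop :=
  ∃ U : Subgroup G, IsOpen (U : Set G) ∧ ∃ a : G, A = (fun u => a * u) '' (U : Set G)

/-- The coarse group `M(G)`: the collection of open cosets of `G` (the ternary relation
`AB ⊑ C`, i.e. `{ab : a ∈ A, b ∈ B} ⊆ C`, is expressed directly below). -/
abbrev MG : Type := {A : Set G // IsOpenCoset G A}

/-- A full filter on `M(G)`: upward closed and downward directed with respect to inclusion,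
containing a left coset and a right coset of every open subgroup of `G`. -/
def IsFullFilter (x : Set (MG G)) : Prop :=
  (∀ A ∈ x, ∀ B : MG G, A.1 ⊆ B.1 → B ∈ x) ∧
  (∀ A ∈ x, ∀ B ∈ x, ∃ C ∈ x, C.1 ⊆ A.1 ∧ C.1 ⊆ B.1) ∧
  (∀ U : Subgroup G, IsOpen (U : Set G) →
    (∃ A ∈ x, ∃ a : G, A.1 = (fun u => a * u) '' (U : Set G)) ∧
    (∃ A ∈ x, ∃ a : G, A.1 = (fun u => u * a) '' (U : Set G)))

/-- `F(M(G))`: the set of full filters on `M(G)`. -/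
abbrev FFG : Type := {x : Set (MG G) // IsFullFilter G x}

/-- The product of filters: `x·y = {C : ∃ A ∈ x, B ∈ y, AB ⊆ C}`. -/
def fprodG (x y : Set (MG G)) : Set (MG G) :=
  {C | ∃ A ∈ x, ∃ B ∈ y, ∀ a ∈ A.1, ∀ b ∈ B.1, a * b ∈ C.1}

/-- The topology on `F(M(G))` generated by the sets `Â = {x : A ∈ x}`. -/
def ffTopG : TopologicalSpace (FFG G) :=
  TopologicalSpace.generateFrom {S | ∃ A : MG G, S = {x : FFG G | A ∈ x.1}}

/-!
`S∞` is a topological group in which the pointwise stabilisers of the initial segments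
`{0, …, n - 1}` form a base of open subgroups at `1`; hence open cosets are clopen. A full
filter `x` generates a filter on `G`, and since `x` contains a left and a right coset of every
such stabiliser, both `g k` and `g⁻¹ k` are eventually constant along it. So it converges in
`S∞` to a permutation, which lies in `G` because `G` is closed, and this limit `g` has
`Φ g = x`: the open cosets containing `g` are neighbourhoods of `g`, and the members of `x`
are closed.
-/

open Filter Topology

theorem tendsto_perm_nhds_iff {α : Type*} {l : Filter α} {u : α → Equiv.Perm ℕ}
    {σ : Equiv.Perm ℕ} :
    Tendsto u l (𝓝 σ) ↔
      (∀ k, ∀ᶠ a in l, u a k = σ k) ∧ ∀ k, ∀ᶠ a in l, (u a).symm k = σ.symm k := by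
  rw [nhds_induced, tendsto_comap_iff, nhds_prod_eq, tendsto_prod_iff']
  simp [tendsto_pi_nhds, nhds_discrete]

instance : IsTopologicalGroup (Equiv.Perm ℕ) where
  continuous_mul := continuous_iff_continuousAt.2 fun p => by
    obtain ⟨h1, h1'⟩ := tendsto_perm_nhds_iff.1 (continuous_fst.tendsto p)
    obtain ⟨h2, h2'⟩ := tendsto_perm_nhds_iff.1 (continuous_snd.tendsto p)
    refine tendsto_perm_nhds_iff.2 ⟨fun k => ?_, fun k => ?_⟩
    · filter_upwards [h2 k, h1 (p.2 k)] with q e2 e1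
      simp [e2, e1]
    · filter_upwards [h1' k, h2' (p.1.symm k)] with q e1 e2
      simp [Equiv.Perm.mul_def, e2, e1]
  continuous_inv := continuous_iff_continuousAt.2 fun σ => by
    obtain ⟨h, h'⟩ := tendsto_perm_nhds_iff.1 (continuous_id.tendsto σ)
    exact tendsto_perm_nhds_iff.2 ⟨h', h⟩

section Coset

variable {H : Type*} [Group H]

theorem image_mul_left_subset_of_mem {U V : Subgroup H} {a g : H} (hVU : V ≤ U)
    (hg : g ∈ (a * ·) '' (U : Set H)) : (g * ·) '' (V : Set H) ⊆ (a * ·) '' U := by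
  obtain ⟨u, hu, rfl⟩ := hg
  rintro _ ⟨v, hv, rfl⟩
  exact ⟨u * v, mul_mem hu (hVU hv), (mul_assoc a u v).symm⟩

theorem image_mul_right_eq_image_mul_left_comap_conj (U : Subgroup H) (a : H) :
    (· * a) '' (U : Set H) = (a * ·) '' (U.comap (MulAut.conj a).toMonoidHom : Set H) := by
  ext x
  simp [Set.image_mul_right, Set.image_mul_left, MulAut.conj_apply]

variable [TopologicalSpace H] [IsTopologicalGroup H]

theorem isOpen_comap_conj {U : Subgroup H} (hU : IsOpen (U : Set H)) (a : H) :
    IsOpen (U.comap (MulAut.conj a).toMonoidHom : Set H) :=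
  hU.preimage (show Continuous fun x => a * x * a⁻¹ by fun_prop)

end Coset

section

variable {G}

theorem isOpen_fixingSubgroup_Iio (n : ℕ) : IsOpen (fixingSubgroup G (Set.Iio n) : Set G) := by
  refine Subgroup.isOpen_of_mem_nhds _ (g := 1) ?_
  have h := (tendsto_perm_nhds_iff.1 (continuous_subtype_val.tendsto (1 : G))).1
  filter_upwards [(Set.finite_Iio n).eventually_all.2 fun k _ => h k] with g hg
  exact (mem_fixingSubgroup_iff G).2 hg

theorem exists_fixingSubgroup_subset {O : Set G} (hO : O ∈ 𝓝 1) :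
    ∃ n : ℕ, (fixingSubgroup G (Set.Iio n) : Set G) ⊆ O := by
  have hanti : Antitone fun n : ℕ => (fixingSubgroup G (Set.Iio n) : Set G) :=
    fun _ _ hmn => fixingSubgroup_antitone _ _ (Set.Iio_subset_Iio hmn)
  set F := ⨅ n : ℕ, 𝓟 (fixingSubgroup G (Set.Iio n) : Set G)
  have hfix (k : ℕ) : ∀ᶠ g : G in F, (g : Equiv.Perm ℕ) k = k :=
    mem_iInf_of_mem (k + 1) fun g hg => (mem_fixingSubgroup_iff G).1 hg k (Nat.lt_succ_self k)
  have hle : F ≤ 𝓝 1 := by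
    refine tendsto_id'.1 (tendsto_subtype_rng.2 (tendsto_perm_nhds_iff.2 ⟨hfix, fun k => ?_⟩))
    filter_upwards [hfix k] with g hg
    exact (Equiv.symm_apply_eq _).2 hg.symm
  simpa using (hasBasis_iInf_principal hanti.directed_ge).mem_iff.1 (hle hO)

theorem apply_eq_of_mem_image_mul_left {n : ℕ} {a g : G}
    (hg : g ∈ (a * ·) '' (fixingSubgroup G (Set.Iio n) : Set G)) {k : ℕ} (hk : k < n) :
    (g : Equiv.Perm ℕ) k = (a : Equiv.Perm ℕ) k := by
  obtain ⟨u, hu, rfl⟩ := hg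
  exact congrArg (a : Equiv.Perm ℕ) ((mem_fixingSubgroup_iff G).1 hu k hk)

theorem symm_apply_eq_of_mem_image_mul_right {n : ℕ} {b g : G}
    (hg : g ∈ (· * b) '' (fixingSubgroup G (Set.Iio n) : Set G)) {k : ℕ} (hk : k < n) :
    (g : Equiv.Perm ℕ).symm k = (b : Equiv.Perm ℕ).symm k := by
  obtain ⟨u, hu, rfl⟩ := hg
  have hu' : (u : Equiv.Perm ℕ).symm k = k :=
    (Equiv.symm_apply_eq _).2 ((mem_fixingSubgroup_iff G).1 hu k hk).symm
  simp [Equiv.Perm.mul_def, hu']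

theorem exists_isOpen_image_mul_left_subset {O : Set G} {g : G} (hO : O ∈ 𝓝 g) :
    ∃ U : Subgroup G, IsOpen (U : Set G) ∧ (g * ·) '' (U : Set G) ⊆ O := by
  obtain ⟨n, hn⟩ :=
    exists_fixingSubgroup_subset ((continuous_const_mul g).tendsto' 1 g (mul_one g) hO)
  exact ⟨_, isOpen_fixingSubgroup_Iio n, Set.image_subset_iff.2 hn⟩

def openCoset {U : Subgroup G} (hU : IsOpen (U : Set G)) (a : G) : MG G :=
  ⟨(a * ·) '' (U : Set G), U, hU, a, rfl⟩

theorem mem_openCoset_self {U : Subgroup G} (hU : IsOpen (U : Set G)) (a : G) :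
    a ∈ (openCoset hU a).1 :=
  ⟨1, one_mem U, mul_one a⟩

theorem isClopen_val (A : MG G) : IsClopen A.1 := by
  obtain ⟨A, U, hU, a, rfl⟩ := A
  exact ⟨isClosedMap_mul_left a _ (U.isClosed_of_isOpen hU), isOpenMap_mul_left a _ hU⟩

theorem nonempty_val (A : MG G) : A.1.Nonempty := by
  obtain ⟨A, U, hU, a, rfl⟩ := A
  exact ⟨a, mem_openCoset_self hU a⟩

theorem isFullFilter_setOf_mem (g : G) : IsFullFilter G {A | g ∈ A.1} := by
  refine ⟨fun A hA B hAB => hAB hA, ?_, fun U hU => ⟨?_, ?_⟩⟩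
  · rintro ⟨A, U, hU, a, rfl⟩ hA ⟨B, V, hV, b, rfl⟩ hB
    have hUV : IsOpen ((U ⊓ V : Subgroup G) : Set G) := hU.inter hV
    refine ⟨openCoset hUV g, mem_openCoset_self hUV g, ?_, ?_⟩
    · exact image_mul_left_subset_of_mem inf_le_left hA
    · exact image_mul_left_subset_of_mem inf_le_right hB
  · exact ⟨openCoset hU g, mem_openCoset_self hU g, g, rfl⟩
  · have hW := isOpen_comap_conj hU g
    exact ⟨openCoset hW g, mem_openCoset_self hW g, g,
      (image_mul_right_eq_image_mul_left_comap_conj U g).symm⟩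

def phi (g : G) : FFG G :=
  ⟨{A | g ∈ A.1}, isFullFilter_setOf_mem g⟩

theorem phi_mul (g h : G) : (phi (g * h)).1 = fprodG G (phi g).1 (phi h).1 := by
  ext C
  refine ⟨fun hC => ?_, fun ⟨A, hA, B, hB, hAB⟩ => hAB g hA h hB⟩
  obtain ⟨C, U, hU, c, rfl⟩ := C
  have hW := isOpen_comap_conj hU h⁻¹
  refine ⟨openCoset hW g, mem_openCoset_self hW g, openCoset hU h, mem_openCoset_self hU h, ?_⟩
  rintro _ ⟨v, hv, rfl⟩ _ ⟨u, hu, rfl⟩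
  -- `g (h U h⁻¹) * h U ⊆ g h U`
  refine image_mul_left_subset_of_mem le_rfl hC ⟨h⁻¹ * v * h * u, mul_mem ?_ hu, by group⟩
  simpa [MulAut.conj_apply] using hv

theorem iInter_phi (g : G) : ⋂ A ∈ (phi g).1, (A.1 : Set G) = {g} := by
  refine Set.Subset.antisymm (fun h hh => Subtype.ext (Equiv.ext fun k => ?_))
    (Set.singleton_subset_iff.2 (Set.mem_iInter₂.2 fun A hA => hA))
  have hV := isOpen_fixingSubgroup_Iio (G := G) (k + 1)
  have hk := Set.mem_iInter₂.1 hh (openCoset hV g) (mem_openCoset_self hV g)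
  exact apply_eq_of_mem_image_mul_left hk k.lt_succ_self

theorem phi_injective : Function.Injective (phi (G := G)) := fun g h hgh => by
  have hg := iInter_phi g
  rw [hgh, iInter_phi h] at hg
  exact (Set.singleton_eq_singleton_iff.1 hg).symm

theorem continuous_phi : @Continuous G (FFG G) _ (ffTopG G) phi := by
  refine continuous_generateFrom_iff.2 ?_
  rintro _ ⟨A, rfl⟩
  exact (isClopen_val A).isOpen

theorem isOpenMap_phi (hsurj : Function.Surjective (phi (G := G))) :
    @IsOpenMap G (FFG G) _ (ffTopG G) phi := by
  let _ := ffTopG G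
  intro O hO
  refine isOpen_iff_forall_mem_open.2 ?_
  rintro _ ⟨g, hg, rfl⟩
  obtain ⟨U, hU, hUO⟩ := exists_isOpen_image_mul_left_subset (hO.mem_nhds hg)
  refine ⟨{x | openCoset hU g ∈ x.1}, ?_,
    TopologicalSpace.isOpen_generateFrom_of_mem ⟨_, rfl⟩, mem_openCoset_self hU g⟩
  intro x hx
  obtain ⟨h, rfl⟩ := hsurj x
  exact ⟨h, hUO hx, rfl⟩

def cosetFilter (x : FFG G) : Filter G :=
  ⨅ A ∈ x.1, 𝓟 A.1

theorem hasBasis_cosetFilter (x : FFG G) : (cosetFilter x).HasBasis (· ∈ x.1) Subtype.val := by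
  obtain ⟨-, hdir, hfull⟩ := x.2
  obtain ⟨A, hA, -⟩ := (hfull ⊤ isOpen_univ).1
  exact hasBasis_biInf_principal hdir ⟨A, hA⟩

instance (x : FFG G) : (cosetFilter x).NeBot :=
  (hasBasis_cosetFilter x).neBot_iff.2 fun {A} _ => nonempty_val A

theorem phi_eq_of_cosetFilter_le_nhds {x : FFG G} {g : G} (hx : cosetFilter x ≤ 𝓝 g) :
    phi g = x := by
  refine Subtype.ext (Set.Subset.antisymm (fun A hA => ?_) fun A hA => ?_)
  · obtain ⟨B, hB, hBA⟩ :=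
      (hasBasis_cosetFilter x).mem_iff.1 (hx ((isClopen_val A).isOpen.mem_nhds hA))
    exact x.2.1 B hB A hBA
  · exact (isClopen_val A).isClosed.mem_of_tendsto (tendsto_id'.2 hx)
      ((hasBasis_cosetFilter x).mem_of_mem hA)

theorem exists_eventually_apply_eq (x : FFG G) (k : ℕ) :
    ∃ m, ∀ᶠ g : G in cosetFilter x, (g : Equiv.Perm ℕ) k = m := by
  obtain ⟨-, -, hfull⟩ := x.2
  obtain ⟨A, hA, a, hAa⟩ := (hfull _ (isOpen_fixingSubgroup_Iio (k + 1))).1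
  refine ⟨(a : Equiv.Perm ℕ) k, mem_of_superset ((hasBasis_cosetFilter x).mem_of_mem hA) ?_⟩
  exact fun g hg => apply_eq_of_mem_image_mul_left (hAa ▸ hg) k.lt_succ_self

theorem exists_eventually_symm_apply_eq (x : FFG G) (k : ℕ) :
    ∃ m, ∀ᶠ g : G in cosetFilter x, (g : Equiv.Perm ℕ).symm k = m := by
  obtain ⟨-, -, hfull⟩ := x.2
  obtain ⟨A, hA, b, hAb⟩ := (hfull _ (isOpen_fixingSubgroup_Iio (k + 1))).2
  refine ⟨(b : Equiv.Perm ℕ).symm k,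
    mem_of_superset ((hasBasis_cosetFilter x).mem_of_mem hA) ?_⟩
  exact fun g hg => symm_apply_eq_of_mem_image_mul_right (hAb ▸ hg) k.lt_succ_self

theorem exists_cosetFilter_le_nhds (hclosed : IsClosed (G : Set (Equiv.Perm ℕ))) (x : FFG G) :
    ∃ g : G, cosetFilter x ≤ 𝓝 g := by
  choose f hf using exists_eventually_apply_eq x
  choose f' hf' using exists_eventually_symm_apply_eq x
  have hff' (k : ℕ) : f (f' k) = k := by
    obtain ⟨g, hg', hg⟩ := ((hf' k).and (hf (f' k))).exists
    rw [← hg, ← hg', Equiv.apply_symm_apply]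
  have hf'f (k : ℕ) : f' (f k) = k := by
    obtain ⟨g, hg, hg'⟩ := ((hf k).and (hf' (f k))).exists
    rw [← hg', ← hg, Equiv.symm_apply_apply]
  let σ : Equiv.Perm ℕ := ⟨f, f', hf'f, hff'⟩
  have hσ : Tendsto (fun g : G => (g : Equiv.Perm ℕ)) (cosetFilter x) (𝓝 σ) :=
    tendsto_perm_nhds_iff.2 ⟨hf, hf'⟩
  have hσG : σ ∈ G := hclosed.mem_of_tendsto hσ (Eventually.of_forall fun g => g.2)
  exact ⟨⟨σ, hσG⟩, tendsto_subtype_rng.2 hσ⟩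

theorem phi_surjective (hclosed : IsClosed (G : Set (Equiv.Perm ℕ))) :
    Function.Surjective (phi (G := G)) := fun x =>
  let ⟨g, hg⟩ := exists_cosetFilter_le_nhds hclosed x
  ⟨g, phi_eq_of_cosetFilter_le_nhds hg⟩

end

theorem stmt9 (hclosed : IsClosed (G : Set (Equiv.Perm ℕ))) :
    ∃ Φ : G → FFG G,
      (∀ g : G, (Φ g).1 = {A : MG G | g ∈ A.1}) ∧
      (@IsHomeomorph G (FFG G) _ (ffTopG G) Φ) ∧
      (∀ g h : G, (Φ (g * h)).1 = fprodG G (Φ g).1 (Φ h).1) ∧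
      (∀ x : FFG G, ∀ g : G, Φ g = x ↔ (⋂ A ∈ x.1, (A.1 : Set G)) = {g}) := by
  have hsurj := phi_surjective hclosed
  refine ⟨phi, fun g => rfl, ?_, phi_mul, fun x g => ⟨?_, fun hg => ?_⟩⟩
  · exact @IsHomeomorph.mk _ _ _ (ffTopG G) _ continuous_phi (isOpenMap_phi hsurj)
      ⟨phi_injective, hsurj⟩
  · rintro rfl
    exact iInter_phi g
  · obtain ⟨h, rfl⟩ := hsurj x
    rw [iInter_phi, Set.singleton_eq_singleton_iff] at hg
    rw [hg]

end CoarseS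
end

section
/- Let M be a countable coarse group satisfying the negative-expression axiom and such that the product of full filters is associative, and let V be a *subgroup of M. Then: (a) for every full filter x and every A ∈ LC(V) there is a unique B ∈ LC(V) such that SA ⊑ B for some S ∈ x (written x·A = B); and (b) the resulting map is an action of the group F(M) on LC(V), i.e. 1·A = A and (x·y)·A = x·(y·A) for all full filters x,y and all A ∈ LC(V). -/
/-! Abstract coarse groups (Nies–Schlicht–Tent). -/

namespace CoarsePaper

variable {M : Type}

private lemma disj_symm (c : CG M) {A B : M} (h : Disj c A B) : Disj c B A :=
  fun ⟨C, D, h1, h2⟩ => h ⟨C, D, h2, h1⟩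

/-- Two left *cosets of `V` which are not disjoint are equal. -/
private lemma eqOfLC (c : CG M) (ax : Axioms c) {V B₁ B₂ : M} (hV : IsSub c V)
    (h₁ : LC c V B₁) (h₂ : LC c V B₂) (hnd : ¬ Disj c B₁ B₂) : B₁ = B₂ := by
  have hr := ax.sle_refl V hV
  have d₁ := (ax.lc_disj V V B₁ B₂ hV hV hr h₁ h₂).resolve_right hnd
  have d₂ := (ax.lc_disj V V B₂ B₁ hV hV hr h₂ h₁).resolve_right
    (fun h => hnd (disj_symm c h))
  exact ax.cle_antisymm _ _ d₁ d₂

/-- Any two elements above a common product have a common `⊑`-lower bound. -/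
private lemma commonLower (c : CG M) (ax : Axioms c) {P Q B₁ B₂ : M}
    (h₁ : c.rel P Q B₁) (h₂ : c.rel P Q B₂) :
    ∃ B₃, cle c B₃ B₁ ∧ cle c B₃ B₂ := by
  obtain ⟨β, hβ⟩ := ax.exists_lc P
  obtain ⟨γ, hγ⟩ := ax.exists_rc Q
  obtain ⟨μ, hμ, hμβ, hμγ, -⟩ := ax.meet β γ hβ.1 hγ.1
  obtain ⟨P₄, hP₄, hP₄P⟩ := (ax.lc_sub_iff μ β P hμ hβ.1 hβ).mp hμβ
  obtain ⟨Q₄, hQ₄, hQ₄Q⟩ := (ax.rc_sub_iff μ γ Q hμ hγ.1 hγ).mp hμγ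
  obtain ⟨α, hα⟩ := ax.exists_rc P₄
  obtain ⟨δ, hδ⟩ := ax.exists_lc Q₄
  obtain ⟨B₃, -, -, -, hmin⟩ := ax.prod_exists α μ δ P₄ Q₄ hα hP₄ hQ₄ hδ
  exact ⟨B₃, hmin B₁ (ax.mono P₄ Q₄ P Q B₁ h₁ hP₄P hQ₄Q),
         hmin B₂ (ax.mono P₄ Q₄ P Q B₂ h₂ hP₄P hQ₄Q)⟩

/-- Any two elements of a product of a full filter with a "directed" set are not disjoint. -/
private lemma fprod_notDisj (c : CG M) (ax : Axioms c) {x w : Set M}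
    (hx : FullFilter c x)
    (hw : ∀ B₁ ∈ w, ∀ B₂ ∈ w, ∃ B₃, cle c B₃ B₁ ∧ cle c B₃ B₂)
    {D B' : M} (hD : D ∈ fprod c x w) (hB' : B' ∈ fprod c x w) : ¬ Disj c D B' := by
  obtain ⟨A₁, hA₁, B₁, hB₁, h₁⟩ := hD
  obtain ⟨A₂, hA₂, B₂, hB₂, h₂⟩ := hB'
  obtain ⟨A₃, hA₃, c₁, c₂⟩ := hx.directed A₁ hA₁ A₂ hA₂
  obtain ⟨B₃, d₁, d₂⟩ := hw B₁ hB₁ B₂ hB₂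
  exact fun h => h ⟨A₃, B₃, ax.mono _ _ _ _ _ h₁ c₁ d₁, ax.mono _ _ _ _ _ h₂ c₂ d₂⟩

/-- One refinement step: below any `B` there is an element having a left *coset and a
right *coset of `U` above it. -/
private lemma step_lemma (c : CG M) (ax : Axioms c) (B U : M) (hU : IsSub c U) :
    ∃ B', cle c B' B ∧ (∃ L, LC c U L ∧ cle c B' L) ∧ (∃ R, RC c U R ∧ cle c B' R) := by
  obtain ⟨W, hW⟩ := ax.exists_lc B
  obtain ⟨μ, hμ, hμW, hμU, -⟩ := ax.meet W U hW.1 hU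
  obtain ⟨B₁, hB₁, hB₁B⟩ := (ax.lc_sub_iff μ W B hμ hW.1 hW).mp hμW
  obtain ⟨L, hL, hB₁L⟩ := ax.lc_up μ U B₁ hμ hU hμU hB₁
  obtain ⟨P, hP⟩ := ax.exists_rc B₁
  obtain ⟨ν, hν, hνP, hνU, -⟩ := ax.meet P U hP.1 hU
  obtain ⟨B₂, hB₂, hB₂B₁⟩ := (ax.rc_sub_iff ν P B₁ hν hP.1 hP).mp hνP
  obtain ⟨R, hR, hB₂R⟩ := ax.rc_up ν U B₂ hν hU hνU hB₂
  exact ⟨B₂, ax.cle_trans _ _ _ hB₂B₁ hB₁B,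
    ⟨L, hL, ax.cle_trans _ _ _ hB₂B₁ hB₁L⟩, ⟨R, hR, hB₂R⟩⟩

/-- Every element of a countable coarse group belongs to some full filter. -/
private lemma exists_ff (c : CG M) [Countable M] (ax : Axioms c) (A : M) :
    ∃ z : Set M, FullFilter c z ∧ A ∈ z := by
  classical
  have : Nonempty M := ⟨A⟩
  obtain ⟨f, hf⟩ := exists_surjective_nat M
  choose st hstle hstL hstR using fun B U hU => step_lemma c ax B U hU
  let seq : ℕ → M := fun n =>
    Nat.rec A (fun n B => if h : IsSub c (f n) then st B (f n) h else B) n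
  have hsucc : ∀ n, seq (n + 1) =
      if h : IsSub c (f n) then st (seq n) (f n) h else seq n := fun _ => rfl
  have dec : ∀ n, cle c (seq (n + 1)) (seq n) := by
    intro n
    rw [hsucc]
    split_ifs with h
    · exact hstle (seq n) (f n) h
    · exact ax.cle_refl _
  have anti : ∀ n k, cle c (seq (n + k)) (seq n) := by
    intro n k
    induction k with
    | zero => exact ax.cle_refl _
    | succ k ih => exact ax.cle_trans _ _ _ (dec (n + k)) ih
  have anti' : ∀ m n, n ≤ m → cle c (seq m) (seq n) := by
    intro m n h
    obtain ⟨k, rfl⟩ := Nat.exists_eq_add_of_le h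
    exact anti n k
  refine ⟨{C | ∃ n, cle c (seq n) C}, ⟨?_, ?_, ?_, ?_⟩, ⟨0, ax.cle_refl A⟩⟩
  · rintro B ⟨n, hn⟩ C hBC
    exact ⟨n, ax.cle_trans _ _ _ hn hBC⟩
  · rintro B ⟨n, hn⟩ C ⟨m, hm⟩
    refine ⟨seq (max n m), ⟨max n m, ax.cle_refl _⟩,
      ax.cle_trans _ _ _ (anti' _ _ (le_max_left n m)) hn,
      ax.cle_trans _ _ _ (anti' _ _ (le_max_right n m)) hm⟩
  · intro U hU
    obtain ⟨n, rfl⟩ := hf U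
    obtain ⟨L, hL, hle⟩ := hstL (seq n) (f n) hU
    refine ⟨L, ⟨n + 1, ?_⟩, hL⟩
    rw [hsucc, dif_pos hU]
    exact hle
  · intro U hU
    obtain ⟨n, rfl⟩ := hf U
    obtain ⟨R, hR, hre⟩ := hstR (seq n) (f n) hU
    refine ⟨R, ⟨n + 1, ?_⟩, hR⟩
    rw [hsucc, dif_pos hU]
    exact hre

/-- Uniqueness of the result of the action. -/
private lemma act_unique (c : CG M) (ax : Axioms c) {V : M} (hV : IsSub c V)
    {x : Set M} (hx : FullFilter c x) {A B₁ B₂ : M}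
    (h₁ : LC c V B₁) (a₁ : act c x A B₁) (h₂ : LC c V B₂) (a₂ : act c x A B₂) :
    B₁ = B₂ := by
  obtain ⟨S₁, hS₁, r₁⟩ := a₁
  obtain ⟨S₂, hS₂, r₂⟩ := a₂
  obtain ⟨S₃, hS₃, c₁, c₂⟩ := hx.directed S₁ hS₁ S₂ hS₂
  refine eqOfLC c ax hV h₁ h₂ fun h => h ⟨S₃, A, ?_, ?_⟩
  · exact ax.mono _ _ _ _ _ r₁ c₁ (ax.cle_refl A)
  · exact ax.mono _ _ _ _ _ r₂ c₂ (ax.cle_refl A)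

/-- the action of `F(M)` on `LC(V)` is well defined and is a group action. -/
theorem stmt10 (c : CG M) [Countable M] (ax : Axioms c) (nax : NegAx c) (hassoc : FAssoc c)
    (V : M) (hV : IsSub c V) :
    (∀ x : Set M, FullFilter c x → ∀ A, LC c V A → ∃! B, LC c V B ∧ act c x A B) ∧
    (∀ A, LC c V A → act c (fone c) A A) ∧
    (∀ x y : Set M, FullFilter c x → FullFilter c y → ∀ A B B',
      LC c V A → LC c V B → LC c V B' → act c y A B → act c x B B' →
      act c (fprod c x y) A B') := by
  refine ⟨?_, ?_, ?_⟩
  · -- (a) existence and uniqueness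
    intro x hx A hA
    obtain ⟨V₀, hV₀⟩ := ax.exists_rc A
    obtain ⟨S, hSx, hS⟩ := hx.lc_mem V₀ hV₀.1
    obtain ⟨U₀, hU₀⟩ := ax.exists_rc S
    obtain ⟨B, hBr, hBl, hrel, -⟩ := ax.prod_exists U₀ V₀ V S A hU₀ hS hV₀ hA
    exact ⟨B, ⟨hBl, S, hSx, hrel⟩,
      fun B₂ h₂ => act_unique c ax hV hx h₂.1 h₂.2 hBl ⟨S, hSx, hrel⟩⟩
  · -- identity
    intro A hA
    obtain ⟨U, hU⟩ := ax.exists_rc A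
    exact ⟨U, ⟨U, hU.1, ax.cle_refl U⟩, hU.2.1⟩
  · -- compatibility with products
    intro x y hx hy A B B' hA hB hB' hyAB hxBB'
    obtain ⟨z, hz, hAz⟩ := exists_ff c ax A
    obtain ⟨S, hSy, hSAB⟩ := hyAB
    obtain ⟨T, hTx, hTBB'⟩ := hxBB'
    have hB'mem : B' ∈ fprod c x (fprod c y z) :=
      ⟨T, hTx, B, ⟨S, hSy, A, hAz, hSAB⟩, hTBB'⟩
    obtain ⟨V₀, hV₀⟩ := ax.exists_rc A
    obtain ⟨S₀, hS₀y, hS₀⟩ := hy.lc_mem V₀ hV₀.1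
    obtain ⟨W₀, hW₀⟩ := ax.exists_rc S₀
    obtain ⟨T₀, hT₀x, hT₀⟩ := hx.lc_mem W₀ hW₀.1
    obtain ⟨X₀, hX₀⟩ := ax.exists_rc T₀
    obtain ⟨C, hCr, hCl, hTSC, -⟩ := ax.prod_exists X₀ W₀ V₀ T₀ S₀ hX₀ hT₀ hW₀ hS₀
    obtain ⟨D, hDr, hDl, hCAD, -⟩ := ax.prod_exists X₀ V₀ V C A hCr hCl hV₀ hA
    have hCm : C ∈ fprod c x y := ⟨T₀, hT₀x, S₀, hS₀y, hTSC⟩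
    have hDmem : D ∈ fprod c x (fprod c y z) := by
      rw [← hassoc x y z hx hy hz]
      exact ⟨C, hCm, A, hAz, hCAD⟩
    have hw : ∀ B₁ ∈ fprod c y z, ∀ B₂ ∈ fprod c y z,
        ∃ B₃, cle c B₃ B₁ ∧ cle c B₃ B₂ := by
      rintro B₁ ⟨P₁, hP₁, Q₁, hQ₁, r₁⟩ B₂ ⟨P₂, hP₂, Q₂, hQ₂, r₂⟩
      obtain ⟨P₃, hP₃, p₁, p₂⟩ := hy.directed P₁ hP₁ P₂ hP₂
      obtain ⟨Q₃, hQ₃, q₁, q₂⟩ := hz.directed Q₁ hQ₁ Q₂ hQ₂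
      exact commonLower c ax (ax.mono _ _ _ _ _ r₁ p₁ q₁) (ax.mono _ _ _ _ _ r₂ p₂ q₂)
    have hnd := fprod_notDisj c ax hx hw hDmem hB'mem
    have hDB' : D = B' := eqOfLC c ax hV hDl hB' hnd
    exact ⟨C, hCm, hDB' ▸ hCAD⟩

end CoarsePaper
end
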